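/- Let (G, ≤) be a lefthanded graph with labels p_v ∈ [0,1] such that B(S) > 0 for all S ⊆ V. Define x_v = p_v · B(F_v) / B(D_v). Then for every vertex v, x_v · Π_{u ∈ N_v} (1 − x_u) = p_v. -/

import Mathlib

/-!
`B` is multiplicative over unions of disjoint sets with no edges between them, which follows by
induction from the deletion identity `B(S ∪ {z}) = B(S) − p_z B(S ∖ N(z))`. In a lefthanded graph,
if `m` is maximal in `S` and `D_m ⊆ S`, then `D̄_m` is separated in this sense from the rest of `S`,
so `B(S) B(D_m) = B(S ∖ {m}) B(D̄_m)`. Removing the elements of `N_v` from `D_v` one maximal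
element at a time (no vertex of `N_v` lies below one of `F_v`, by lefthandedness) gives
`B(D_v) ∏_{u ∈ N_v} B(D_u) = B(F_v) ∏_{u ∈ N_v} B(D̄_u)`, and the deletion identity
`B(D̄_u) = B(D_u) − p_u B(F_u)` turns each ratio `B(D̄_u) / B(D_u)` into `1 − x_u`.
-/

open scoped Classical

def TreeOrder (V : Type*) [PartialOrder V] : Prop :=
  ∀ w u v : V, w < u → w < v → (u ≤ v ∨ v ≤ u)

def Lefthanded {V : Type*} [PartialOrder V] (G : SimpleGraph V) : Prop :=
  TreeOrder V ∧
  (∀ u v : V, G.Adj u v → u ≤ v ∨ v ≤ u) ∧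
  (∀ w u v : V, w < u → u < v → G.Adj v w → G.Adj v u)

/-- `D_v = {u : u < v}`. -/
noncomputable def Dset {V : Type*} [Fintype V] [PartialOrder V] (v : V) : Finset V :=
  Finset.univ.filter (fun u => u < v)

/-- `D̄_v = D_v ∪ {v}`. -/
noncomputable def Dbar {V : Type*} [Fintype V] [DecidableEq V] [PartialOrder V] (v : V) :
    Finset V :=
  insert v (Dset v)

/-- `N_v = {u < v : u ~ v}`. -/
noncomputable def Nset {V : Type*} [Fintype V] [PartialOrder V] (G : SimpleGraph V) (v : V) :
    Finset V :=
  Finset.univ.filter (fun u => u < v ∧ G.Adj u v)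

/-- `F_v = D_v \ N_v`. -/
noncomputable def Fset {V : Type*} [Fintype V] [DecidableEq V] [PartialOrder V]
    (G : SimpleGraph V) (v : V) : Finset V :=
  Dset v \ Nset G v

/-- `μ(U)`: the set of maximal elements of `U`. -/
noncomputable def maxElts {V : Type*} [PartialOrder V] (U : Finset V) : Finset V :=
  U.filter (fun u => ∀ w ∈ U, ¬ u < w)

def IndepSet {V : Type*} (G : SimpleGraph V) (I : Finset V) : Prop :=
  ∀ u ∈ I, ∀ w ∈ I, ¬ G.Adj u w

/-- `B(S) = Σ_{I ⊆ S, I independent} (−1)^{|I|} Π_{v∈I} p_v`. -/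
noncomputable def Bfun {V : Type*} [Fintype V] (G : SimpleGraph V) (p : V → ℝ) (S : Finset V) :
    ℝ :=
  ∑ I ∈ S.powerset.filter (fun I => IndepSet G I), (-1 : ℝ) ^ I.card * ∏ v ∈ I, p v

/-- `𝔮(S) = Σ_{I ⊇ S, I independent} (−1)^{|I|−|S|} Π_{v∈I} p_v`. -/
noncomputable def qfun {V : Type*} [Fintype V] (G : SimpleGraph V) (p : V → ℝ) (S : Finset V) :
    ℝ :=
  ∑ I ∈ Finset.univ.powerset.filter (fun I => IndepSet G I ∧ S ⊆ I),
    (-1 : ℝ) ^ (I.card - S.card) * ∏ v ∈ I, p v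

def DownClosed {V : Type*} [Fintype V] [PartialOrder V] (S : Finset V) : Prop :=
  ∀ s ∈ S, Dset s ⊆ S

open Finset

section Graph

variable {V : Type*} [Fintype V] [DecidableEq V] (G : SimpleGraph V) (p : V → ℝ)

omit [Fintype V] in
theorem indepSet_insert_iff {z : V} {t : Finset V} :
    IndepSet G (insert z t) ↔ IndepSet G t ∧ ∀ u ∈ t, ¬ G.Adj z u := by
  constructor
  · intro h
    exact ⟨fun u hu w hw => h u (mem_insert_of_mem hu) w (mem_insert_of_mem hw),
      fun u hu => h z (mem_insert_self z t) u (mem_insert_of_mem hu)⟩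
  · rintro ⟨ht, hz⟩ u hu w hw
    rcases mem_insert.1 hu with rfl | hut <;> rcases mem_insert.1 hw with rfl | hwt
    · exact G.irrefl
    · exact hz w hwt
    · exact fun h => hz u hut h.symm
    · exact ht u hut w hwt

omit [DecidableEq V] in
theorem Bfun_empty : Bfun G p ∅ = 1 := by
  rw [Bfun, powerset_empty, sum_filter, sum_singleton, if_pos (by simp [IndepSet])]
  simp

theorem Bfun_insert {z : V} {S : Finset V} (hz : z ∉ S) :
    Bfun G p (insert z S) = Bfun G p S - p z * Bfun G p (S.filter fun u => ¬ G.Adj z u) := by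
  set S' := S.filter fun u => ¬ G.Adj z u
  have hterm : ∀ t ∈ S.powerset,
      (if IndepSet G (insert z t) then (-1 : ℝ) ^ (insert z t).card * ∏ v ∈ insert z t, p v
        else 0) =
      -p z * if t ⊆ S' ∧ IndepSet G t then (-1 : ℝ) ^ t.card * ∏ v ∈ t, p v else 0 := by
    intro t ht
    have hzt : z ∉ t := fun h => hz (mem_powerset.1 ht h)
    have hsub : t ⊆ S' ↔ ∀ u ∈ t, ¬ G.Adj z u := by
      simp only [S', subset_iff, mem_filter]
      exact ⟨fun h u hu => (h hu).2, fun h u hu => ⟨mem_powerset.1 ht hu, h u hu⟩⟩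
    simp only [indepSet_insert_iff, hsub, and_comm, card_insert_of_notMem hzt,
      prod_insert hzt]
    split_ifs <;> ring
  have hpowerset : S.powerset.filter (fun t => t ⊆ S' ∧ IndepSet G t) =
      S'.powerset.filter (IndepSet G) := by
    ext t
    simp only [mem_filter, mem_powerset]
    exact ⟨fun h => h.2, fun h => ⟨h.1.trans (filter_subset _ S), h⟩⟩
  unfold Bfun
  rw [sum_filter, sum_powerset_insert hz, sum_congr rfl hterm, ← mul_sum, ← sum_filter,
    ← sum_filter, hpowerset]
  ring

theorem Bfun_union {X Y : Finset V} (hXY : Disjoint X Y) (hadj : ∀ x ∈ X, ∀ y ∈ Y, ¬ G.Adj x y) :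
    Bfun G p (X ∪ Y) = Bfun G p X * Bfun G p Y := by
  induction X using Finset.strongInduction with
  | H X ih =>
  rcases X.eq_empty_or_nonempty with rfl | ⟨x, hx⟩
  · rw [empty_union, Bfun_empty, one_mul]
  have hxX' : x ∉ X.erase x := notMem_erase x X
  have hxY : x ∉ Y := disjoint_left.1 hXY hx
  have hfilter : ((X.erase x) ∪ Y).filter (fun u => ¬ G.Adj x u) =
      (X.erase x).filter (fun u => ¬ G.Adj x u) ∪ Y := by
    rw [filter_union, filter_true_of_mem (fun y hy => hadj x hx y hy)]
  have ih_sub : ∀ X' ⊆ X.erase x, Bfun G p (X' ∪ Y) = Bfun G p X' * Bfun G p Y := fun X' hX' =>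
    ih X' (hX'.trans_ssubset (erase_ssubset hx))
      (disjoint_of_subset_left (hX'.trans (erase_subset x X)) hXY)
      (fun u hu => hadj u (erase_subset x X (hX' hu)))
  rw [← insert_erase hx, insert_union, Bfun_insert G p (by simp [hxX', hxY]), Bfun_insert G p hxX',
    hfilter, ih_sub _ subset_rfl, ih_sub _ (filter_subset _ _)]
  ring

end Graph

section Order

variable {V : Type*} [Fintype V] [DecidableEq V] [PartialOrder V] (G : SimpleGraph V) (p : V → ℝ)

omit [DecidableEq V] in
@[simp]
theorem mem_Dset {u v : V} : u ∈ Dset v ↔ u < v := by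
  simp [Dset]

@[simp]
theorem mem_Dbar {u v : V} : u ∈ Dbar v ↔ u ≤ v := by
  simp [Dbar, le_iff_lt_or_eq, or_comm]

omit [DecidableEq V] in
@[simp]
theorem mem_Nset {u v : V} : u ∈ Nset G v ↔ u < v ∧ G.Adj u v := by
  simp [Nset]

@[simp]
theorem mem_Fset {u v : V} : u ∈ Fset G v ↔ u < v ∧ ¬ G.Adj u v := by
  simp only [Fset, mem_sdiff, mem_Dset, mem_Nset]
  tauto

theorem Bfun_Dbar (v : V) : Bfun G p (Dbar v) = Bfun G p (Dset v) - p v * Bfun G p (Fset G v) := by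
  have hF : (Dset v).filter (fun u => ¬ G.Adj v u) = Fset G v := by
    ext u
    simp only [mem_filter, mem_Dset, mem_Fset, G.adj_comm v u]
  rw [Dbar, Bfun_insert G p (by simp), hF]

variable {G} (hT : TreeOrder V) (hcomp : ∀ u v : V, G.Adj u v → u ≤ v ∨ v ≤ u)
include hT hcomp

omit [Fintype V] [DecidableEq V] in
theorem not_adj_of_le_of_not_le {m x y : V} (hmx : ¬ m < x) (hxm : ¬ x ≤ m) (hym : y ≤ m) :
    ¬ G.Adj x y := by
  intro hxy
  rcases hcomp x y hxy with hle | hle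
  · exact hxm (hle.trans hym)
  have hlt : y < x := lt_of_le_of_ne hle hxy.ne'
  rcases hym.lt_or_eq with hym | rfl
  · rcases hT y x m hlt hym with h | h
    · exact hxm h
    · exact hmx (lt_of_le_of_ne h fun h' => hxm h'.ge)
  · exact hmx hlt

theorem Bfun_mul_Bfun_Dset {S : Finset V} {m : V} (hm : m ∈ S) (hmax : ∀ x ∈ S, ¬ m < x)
    (hD : Dset m ⊆ S) :
    Bfun G p S * Bfun G p (Dset m) = Bfun G p (S.erase m) * Bfun G p (Dbar m) := by
  set R := S.filter fun x => ¬ x ≤ m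
  have hsep : ∀ x ∈ R, ∀ y, y ≤ m → ¬ G.Adj x y := fun x hx y hy =>
    have hx := mem_filter.1 hx
    not_adj_of_le_of_not_le hT hcomp (hmax x hx.1) hx.2 hy
  have hD' : ∀ x < m, x ∈ S := fun x hx => hD (mem_Dset.2 hx)
  have hS : S = R ∪ Dbar m := by
    ext x
    simp only [R, mem_union, mem_filter, mem_Dbar, le_iff_lt_or_eq]
    grind
  have hSm : S.erase m = R ∪ Dset m := by
    ext x
    simp only [R, mem_erase, mem_union, mem_filter, mem_Dset, le_iff_lt_or_eq]
    grind
  rw [hSm, hS, Bfun_union G p _ (fun x hx y hy => hsep x hx y (mem_Dbar.1 hy)),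
    Bfun_union G p _ (fun x hx y hy => hsep x hx y (mem_Dset.1 hy).le)]
  · ring
  · exact disjoint_left.2 fun x hx hy => (mem_filter.1 hx).2 (mem_Dset.1 hy).le
  · exact disjoint_left.2 fun x hx hy => (mem_filter.1 hx).2 (mem_Dbar.1 hy)

theorem Bfun_mul_prod_Dset {F S : Finset V} (hFS : F ⊆ S) (hS : DownClosed S)
    (hF : ∀ m ∈ S \ F, ∀ x ∈ F, ¬ m < x) :
    Bfun G p S * ∏ u ∈ S \ F, Bfun G p (Dset u) = Bfun G p F * ∏ u ∈ S \ F, Bfun G p (Dbar u) := by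
  induction S using Finset.strongInduction with
  | H S ih =>
  rcases (S \ F).eq_empty_or_nonempty with hSF | hSF
  · rw [hSF, prod_empty, prod_empty, subset_antisymm (sdiff_eq_empty_iff_subset.1 hSF) hFS]
  obtain ⟨m, hm⟩ := (S \ F).exists_maximal hSF
  obtain ⟨hmS, hmF⟩ := mem_sdiff.1 hm.prop
  have hmax : ∀ x ∈ S, ¬ m < x := fun x hx hlt =>
    if hxF : x ∈ F then hF m hm.prop x hxF hlt else hm.not_gt (mem_sdiff.2 ⟨hx, hxF⟩) hlt
  have hdc : DownClosed (S.erase m) := fun s hs w hw =>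
    mem_erase.2 ⟨fun h => hmax s (mem_of_mem_erase hs) (h ▸ mem_Dset.1 hw),
      hS s (mem_of_mem_erase hs) hw⟩
  have hstep := Bfun_mul_Bfun_Dset p hT hcomp hmS hmax (hS m hmS)
  have ih' := ih (S.erase m) (erase_ssubset hmS)
    (fun x hx => mem_erase.2 ⟨fun h => hmF (h ▸ hx), hFS hx⟩) hdc
    (fun x hx => hF x (sdiff_subset_sdiff (erase_subset m S) subset_rfl hx))
  rw [erase_sdiff_comm] at ih'
  rw [← mul_prod_erase _ _ hm.prop, ← mul_prod_erase _ _ hm.prop]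
  linear_combination (∏ u ∈ (S \ F).erase m, Bfun G p (Dset u)) * hstep + Bfun G p (Dbar m) * ih'

end Order

theorem stmt8_general {V : Type*} [Fintype V] [DecidableEq V] [PartialOrder V]
    (G : SimpleGraph V) (p : V → ℝ)
    (hG : Lefthanded G) (hB : ∀ S : Finset V, 0 < Bfun G p S) (v : V) :
    (p v * Bfun G p (Fset G v) / Bfun G p (Dset v)) *
      ∏ u ∈ Nset G v, (1 - p u * Bfun G p (Fset G u) / Bfun G p (Dset u)) = p v := by
  obtain ⟨hT, hcomp, hleft⟩ := hG
  have hDc : DownClosed (Dset v) := fun s hs w hw =>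
    mem_Dset.2 ((mem_Dset.1 hw).trans (mem_Dset.1 hs))
  have hNF : Dset v \ Fset G v = Nset G v :=
    Finset.sdiff_sdiff_eq_self fun u hu => mem_Dset.2 ((mem_Nset G).1 hu).1
  have hNabove : ∀ m ∈ Dset v \ Fset G v, ∀ x ∈ Fset G v, ¬ m < x := by
    intro m hm x hx hmx
    rw [hNF, mem_Nset] at hm
    rw [mem_Fset] at hx
    exact hx.2 (hleft m x v hmx hx.1 hm.2.symm).symm
  have key := Bfun_mul_prod_Dset p hT hcomp (F := Fset G v) sdiff_subset hDc hNabove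
  rw [hNF] at key
  have hratio : ∀ u, 1 - p u * Bfun G p (Fset G u) / Bfun G p (Dset u) =
      Bfun G p (Dbar u) / Bfun G p (Dset u) := fun u => by
    rw [Bfun_Dbar]
    field_simp [(hB (Dset u)).ne']
  rw [prod_congr rfl fun u _ => hratio u, prod_div_distrib]
  field_simp [(hB (Dset v)).ne', (prod_pos fun u _ => hB (Dset u)).ne']
  linear_combination -p v * key

theorem stmt8 {V : Type*} [Fintype V] [DecidableEq V] [PartialOrder V]
    (G : SimpleGraph V) (p : V → ℝ) (hp : ∀ v, 0 ≤ p v ∧ p v ≤ 1)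
    (hG : Lefthanded G) (hB : ∀ S : Finset V, 0 < Bfun G p S) (v : V) :
    (p v * Bfun G p (Fset G v) / Bfun G p (Dset v)) *
      ∏ u ∈ Nset G v, (1 - p u * Bfun G p (Fset G u) / Bfun G p (Dset u)) = p v :=
  stmt8_general G p hG hB v
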